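/- arXiv:1510.03056 — 3 statements merged into one kernel-verified Lean document; each statement's English description precedes it below -/
import Mathlib

section
/- The equation a³ − a + b³ − b = c³ − c has infinitely many solutions in positive integers a, b, c with a ≥ 2 and b ≥ 2 (i.e., the set of triples (a, b, c) of integers with a ≥ 2, b ≥ 2, c ≥ 2 satisfying a³ − a + b³ − b = c³ − c is infinite). -/
/-- Pell-type sequence of pairs `(k, b)` satisfying the invariant
`3b² + 3kb − 7k² − 12k − 5 = 0`. -/
def pellSeq : ℕ → ℤ × ℤ
  | 0 => (7, 9)
  | n + 1 =>
    let p := pellSeq n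
    (550 * p.1 + 261 * p.2 + 324, 609 * p.1 + 289 * p.2 + 360)

lemma pellSeq_inv (n : ℕ) :
    3 * (pellSeq n).2 ^ 2 + 3 * (pellSeq n).1 * (pellSeq n).2
      - 7 * (pellSeq n).1 ^ 2 - 12 * (pellSeq n).1 - 5 = 0
    ∧ 7 ≤ (pellSeq n).1 ∧ 9 ≤ (pellSeq n).2 := by
  induction n with
  | zero => norm_num [pellSeq]
  | succ n ih =>
    obtain ⟨hQ, hk, hb⟩ := ih
    refine ⟨?_, ?_, ?_⟩
    · show 3 * (609 * (pellSeq n).1 + 289 * (pellSeq n).2 + 360) ^ 2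
        + 3 * (550 * (pellSeq n).1 + 261 * (pellSeq n).2 + 324)
            * (609 * (pellSeq n).1 + 289 * (pellSeq n).2 + 360)
        - 7 * (550 * (pellSeq n).1 + 261 * (pellSeq n).2 + 324) ^ 2
        - 12 * (550 * (pellSeq n).1 + 261 * (pellSeq n).2 + 324) - 5 = 0
      linear_combination hQ
    · show (7 : ℤ) ≤ 550 * (pellSeq n).1 + 261 * (pellSeq n).2 + 324
      linarith
    · show (9 : ℤ) ≤ 609 * (pellSeq n).1 + 289 * (pellSeq n).2 + 360
      linarith

lemma pellSeq_fst_strictMono : StrictMono (fun n => (pellSeq n).1) := by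
  apply strictMono_nat_of_lt_succ
  intro n
  obtain ⟨_, hk, hb⟩ := pellSeq_inv n
  show (pellSeq n).1 < 550 * (pellSeq n).1 + 261 * (pellSeq n).2 + 324
  linarith

/-- The equation `a³ − a + b³ − b = c³ − c` has infinitely many solutions in
integers `a, b, c` with `a ≥ 2`, `b ≥ 2`, `c ≥ 2`. -/
theorem stmt_0 :
    {p : ℤ × ℤ × ℤ | 2 ≤ p.1 ∧ 2 ≤ p.2.1 ∧ 2 ≤ p.2.2 ∧
      p.1 ^ 3 - p.1 + p.2.1 ^ 3 - p.2.1 = p.2.2 ^ 3 - p.2.2}.Infinite := by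
  apply Set.infinite_of_injective_forall_mem
    (f := fun n : ℕ =>
      (2 * (pellSeq n).1 + 1, (pellSeq n).2, (pellSeq n).2 + (pellSeq n).1))
  · intro m n hmn
    have h := congrArg Prod.fst hmn
    simp only at h
    have : (pellSeq m).1 = (pellSeq n).1 := by linarith
    exact pellSeq_fst_strictMono.injective this
  · intro n
    obtain ⟨hQ, hk, hb⟩ := pellSeq_inv n
    refine ⟨by dsimp; linarith, by dsimp; linarith, by dsimp; linarith, ?_⟩
    dsimp only
    linear_combination (-(pellSeq n).1) * hQ
end

section
/- The equation a(a+1)(a+2) + b(b+1)(b+2) = c(c+1)(c+2) has infinitely many solutions in positive integers a, b, c. -/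
/-- The equation `a(a+1)(a+2) + b(b+1)(b+2) = c(c+1)(c+2)` has infinitely many
solutions in positive integers. -/
theorem stmt_2 :
    {p : ℤ × ℤ × ℤ | 0 < p.1 ∧ 0 < p.2.1 ∧ 0 < p.2.2 ∧
      p.1 * (p.1 + 1) * (p.1 + 2) + p.2.1 * (p.2.1 + 1) * (p.2.1 + 2) =
        p.2.2 * (p.2.2 + 1) * (p.2.2 + 2)}.Infinite := by
  apply Set.infinite_of_injective_forall_mem
    (f := fun n : ℕ => (((3:ℤ)*((n:ℤ)+2)^4 + 3*((n:ℤ)+2)^3 - 3*((n:ℤ)+2)^2 - 2*((n:ℤ)+2) - 1,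
      ((n:ℤ)+3)*(3*((n:ℤ)+2)^2 - 2),
      3*((n:ℤ)+2)^4 + 3*((n:ℤ)+2)^3 - 3*((n:ℤ)+2)^2 - ((n:ℤ)+2)) : ℤ × ℤ × ℤ))
  · intro m n h
    simp only [Prod.mk.injEq] at h
    have h1 := h.1
    have h3 := h.2.2
    have : ((m:ℤ)+2) = ((n:ℤ)+2) := by nlinarith [h1, h3]
    exact_mod_cast by linarith [this]
  · intro n
    have hn : (0:ℤ) ≤ (n:ℤ) := Int.natCast_nonneg n
    simp only [Set.mem_setOf_eq]
    refine ⟨by nlinarith, by nlinarith, by nlinarith, by ring⟩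
end

section
/- The equation 123v² − 6u² = 3 has no integer solutions (u, v). -/
lemma key : ∀ y : ℕ, ∀ x : ℤ, (x ^ 2 - 82 * (y : ℤ) ^ 2) ^ 2 ≠ 4 := by
  intro y
  induction y using Nat.strong_induction_on with
  | _ y ih =>
    intro x hx
    set a : ℤ := |x| with ha
    have ha2 : a ^ 2 = x ^ 2 := sq_abs x
    have ha0 : 0 ≤ a := abs_nonneg x
    rw [← ha2] at hx
    have h2 : a ^ 2 - 82 * (y : ℤ) ^ 2 = 2 ∨ a ^ 2 - 82 * (y : ℤ) ^ 2 = -2 := by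
      have hfac : (a ^ 2 - 82 * (y:ℤ)^2 - 2) * (a ^ 2 - 82 * (y:ℤ)^2 + 2) = 0 := by nlinarith
      rcases mul_eq_zero.mp hfac with h | h
      · exact Or.inl (by linarith)
      · exact Or.inr (by linarith)
    match y, ih with
    | 0, ih =>
      push_cast at h2
      have hub : a ≤ 2 := by rcases h2 with h | h <;> nlinarith
      interval_cases a <;> rcases h2 with h | h <;> norm_num at h
    | 1, ih =>
      push_cast at h2
      have hub : a ≤ 9 := by rcases h2 with h | h <;> nlinarith
      have hlb : 9 ≤ a := by rcases h2 with h | h <;> nlinarith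
      have h9 : a = 9 := le_antisymm hub hlb
      rw [h9] at h2
      rcases h2 with h | h <;> norm_num at h
    | (n+2), ih =>
      set Y : ℤ := ((n:ℤ) + 2) with hY
      have hYpos : 2 ≤ Y := by omega
      push_cast at h2
      have hgt : 9 * Y < a := by
        rcases h2 with h | h <;> nlinarith
      have hlt : a < 10 * Y := by
        rcases h2 with h | h <;> nlinarith
      have hnorm : ((9 * a - 82 * Y) ^ 2 - 82 * (a - 9 * Y) ^ 2) ^ 2 = 4 := by
        have heq : (9 * a - 82 * Y) ^ 2 - 82 * (a - 9 * Y) ^ 2 = -(a ^ 2 - 82 * Y ^ 2) := by ring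
        rw [heq]
        rcases h2 with h | h <;> rw [h] <;> norm_num
      have hyn : (a - 9 * Y).toNat < n + 2 := by omega
      have hcast : ((a - 9 * Y).toNat : ℤ) = a - 9 * Y := Int.toNat_of_nonneg (by omega)
      exact ih (a - 9 * Y).toNat hyn (9 * a - 82 * Y) (by rw [hcast]; exact hnorm)

/-- The equation `123v² − 6u² = 3` has no integer solutions. -/
theorem stmt_12 : ¬ ∃ u v : ℤ, 123 * v ^ 2 - 6 * u ^ 2 = 3 := by
  rintro ⟨u, v, h⟩
  have hk := key v.natAbs (2 * u)
  have hv : ((v.natAbs : ℤ)) ^ 2 = v ^ 2 := by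
    rw [← Int.abs_eq_natAbs, sq_abs]
  rw [hv] at hk
  apply hk
  nlinarith
end
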